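/- arXiv:1401.6026 — 4 statements merged into one kernel-verified Lean document; each statement's English description precedes it below -/
import Mathlib

section
/- Define the twist covariant derivative on ℍⁿ_{-κ} by D̃_ξ Z = D_ξ Z + (κ/f)⟨ξ, Z⟩ X, where f is the static potential and X = r f ∂/∂r. Then a vector field Z satisfies D̃Z = 0 if and only if Z = Σᵢ aᵢ ∂/∂xⁱ for real constants aᵢ in the static coordinates. -/
namespace Stmt3Aux

variable {n : ℕ}

noncomputable def cc (κ : ℝ) (y : Fin n → ℝ) : ℝ := Real.sqrt (1/κ + ∑ i, y i ^ 2)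

noncomputable def ph (κ : ℝ) (y : Fin n → ℝ) : Fin (n+1) → ℝ := Fin.cons (cc κ y) y

def mk (v w : Fin (n+1) → ℝ) : ℝ := -(v 0 * w 0) + ∑ i : Fin n, v i.succ * w i.succ

noncomputable def gd (κ : ℝ) (y v : Fin n → ℝ) : Fin (n+1) → ℝ :=
  Fin.cons ((∑ i, y i * v i) / cc κ y) v

lemma q_pos {κ : ℝ} (hκ : 0 < κ) (y : Fin n → ℝ) : 0 < 1/κ + ∑ i, y i ^ 2 :=
  add_pos_of_pos_of_nonneg (by positivity) (Finset.sum_nonneg fun i _ => sq_nonneg _)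

lemma cc_pos {κ : ℝ} (hκ : 0 < κ) (y : Fin n → ℝ) : 0 < cc κ y :=
  Real.sqrt_pos.mpr (q_pos hκ y)

lemma cc_sq {κ : ℝ} (hκ : 0 < κ) (y : Fin n → ℝ) : cc κ y ^ 2 = 1/κ + ∑ i, y i ^ 2 :=
  Real.sq_sqrt (q_pos hκ y).le

lemma mk_symm (v w : Fin (n+1) → ℝ) : mk v w = mk w v := by
  simp [mk, mul_comm]

lemma mk_ph {κ : ℝ} (hκ : 0 < κ) (y : Fin n → ℝ) : mk (ph κ y) (ph κ y) = -(1/κ) := by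
  have h := cc_sq hκ y
  simp only [mk, ph, Fin.cons_zero, Fin.cons_succ, ← pow_two]
  rw [h]; ring

lemma mk_ph_gd {κ : ℝ} (hκ : 0 < κ) (u v : Fin n → ℝ) : mk (ph κ u) (gd κ u v) = 0 := by
  simp only [mk, ph, gd, Fin.cons_zero, Fin.cons_succ]
  field_simp [(cc_pos hκ u).ne']
  ring

lemma hasDerivAt_mk {A B : ℝ → Fin (n+1) → ℝ} {A' B' : Fin (n+1) → ℝ} {s : ℝ}
    (hA : HasDerivAt A A' s) (hB : HasDerivAt B B' s) :
    HasDerivAt (fun t => mk (A t) (B t)) (mk A' (B s) + mk (A s) B') s := by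
  have hA' : ∀ i, HasDerivAt (fun t => A t i) (A' i) s := fun i => hasDerivAt_pi.mp hA i
  have hB' : ∀ i, HasDerivAt (fun t => B t i) (B' i) s := fun i => hasDerivAt_pi.mp hB i
  have h0 : HasDerivAt (fun t => -(A t 0 * B t 0)) (-(A' 0 * B s 0 + A s 0 * B' 0)) s :=
    ((hA' 0).mul (hB' 0)).neg
  have hs : HasDerivAt (fun t => ∑ i : Fin n, A t i.succ * B t i.succ)
      (∑ i : Fin n, (A' i.succ * B s i.succ + A s i.succ * B' i.succ)) s :=
    HasDerivAt.fun_sum fun i _ => (hA' i.succ).mul (hB' i.succ)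
  have h := h0.add hs
  refine h.congr_deriv ?_
  simp [mk, Finset.sum_add_distrib]; ring

lemma hasDerivAt_ph {κ : ℝ} (hκ : 0 < κ) (y v : Fin n → ℝ) (s : ℝ) :
    HasDerivAt (fun t => ph κ (y + t • v)) (gd κ (y + s • v) v) s := by
  rw [hasDerivAt_pi]
  intro i
  refine Fin.cases ?_ ?_ i
  · have h1 : HasDerivAt (fun t : ℝ => 1/κ + ∑ j, (y j + t * v j) ^ 2)
        (∑ j, 2 * (y j + s * v j) * v j) s := by
      refine HasDerivAt.const_add _ (HasDerivAt.fun_sum fun j _ => ?_)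
      have hb : HasDerivAt (fun t : ℝ => y j + t * v j) (v j) s := by
        simpa using ((hasDerivAt_id s).mul_const (v j)).const_add (y j)
      simpa using hb.fun_pow 2
    have h2 := h1.sqrt (q_pos hκ (fun j => y j + s * v j)).ne'
    have hfun : (fun t => ph κ (y + t • v) 0)
        = fun t : ℝ => Real.sqrt (1/κ + ∑ j, (y j + t * v j) ^ 2) := by
      funext t
      simp [ph, cc]
    rw [hfun]
    refine h2.congr_deriv ?_
    have hc : cc κ (y + s • v) = Real.sqrt (1/κ + ∑ j, (y j + s * v j) ^ 2) := by
      simp [cc]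
    have hsum : (∑ i, (y + s • v) i * v i) = ∑ j, (y j + s * v j) * v j := by
      simp
    have h2S : (∑ j, 2 * (y j + s * v j) * v j) = 2 * ∑ j, (y j + s * v j) * v j := by
      rw [Finset.mul_sum]; exact Finset.sum_congr rfl fun j _ => by ring
    simp only [gd, Fin.cons_zero, hc, hsum, h2S]
    rw [mul_div_mul_left _ _ (two_ne_zero)]
  · intro k
    have hfun : (fun t => ph κ (y + t • v) k.succ) = fun t : ℝ => y k + t * v k := by
      funext t; simp [ph]
    rw [hfun]
    have : gd κ (y + s • v) v k.succ = v k := by simp [gd]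
    rw [this]
    simpa using ((hasDerivAt_id s).mul_const (v k)).const_add (y k)


lemma chain {Z : (Fin (n+1) → ℝ) → (Fin (n+1) → ℝ)} (hZ : ContDiff ℝ (⊤ : ℕ∞) Z) {κ : ℝ}
    (hκ : 0 < κ) (y v : Fin n → ℝ) (s : ℝ) :
    HasDerivAt (fun t => Z (ph κ (y + t • v)))
      (fderiv ℝ Z (ph κ (y + s • v)) (gd κ (y + s • v) v)) s :=
  ((hZ.differentiable (by simp) (ph κ (y + s • v))).hasFDerivAt).comp_hasDerivAt s
    (hasDerivAt_ph hκ y v s)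

lemma tangency_deriv {Z : (Fin (n+1) → ℝ) → (Fin (n+1) → ℝ)} (hZ : ContDiff ℝ (⊤ : ℕ∞) Z) {κ : ℝ}
    (hκ : 0 < κ) (hm : ∀ u : Fin n → ℝ, mk (ph κ u) (Z (ph κ u)) = 0)
    (y v : Fin n → ℝ) (s : ℝ) :
    mk (ph κ (y + s • v)) (fderiv ℝ Z (ph κ (y + s • v)) (gd κ (y + s • v) v))
      = - mk (gd κ (y + s • v) v) (Z (ph κ (y + s • v))) := by
  have h1 := hasDerivAt_mk (hasDerivAt_ph hκ y v s) (chain hZ hκ y v s)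
  have h2 : (fun t : ℝ => mk (ph κ (y + t • v)) (Z (ph κ (y + t • v)))) = fun _ => (0:ℝ) :=
    funext fun t => hm _
  rw [h2] at h1
  have h3 := h1.unique (hasDerivAt_const s 0)
  linarith [h3]

lemma Dt_eval {Z : (Fin (n+1) → ℝ) → (Fin (n+1) → ℝ)} {κ : ℝ} (hκ : 0 < κ)
    (x ξ : Fin (n+1) → ℝ) (hx0 : 0 < x 0)
    (hmd : mk x (fderiv ℝ Z x ξ) = - mk ξ (Z x)) :
    (fderiv ℝ Z x ξ + (κ * mk (fderiv ℝ Z x ξ) x) • x)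
      + ((κ / (Real.sqrt κ * x 0)) * mk ξ (Z x)) •
        (Real.sqrt κ • (x 0 • x - κ⁻¹ • (Pi.single 0 1 : Fin (n+1) → ℝ)))
    = fderiv ℝ Z x ξ - (mk ξ (Z x) / x 0) • (Pi.single 0 1 : Fin (n+1) → ℝ) := by
  have hsym : mk (fderiv ℝ Z x ξ) x = - mk ξ (Z x) := by rw [mk_symm]; exact hmd
  have hs : Real.sqrt κ * Real.sqrt κ = κ := Real.mul_self_sqrt hκ.le
  have hsne : Real.sqrt κ ≠ 0 := (Real.sqrt_pos.mpr hκ).ne'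
  funext i
  simp only [Pi.add_apply, Pi.sub_apply, Pi.smul_apply, smul_eq_mul, hsym]
  field_simp
  ring


lemma ph_zero (κ : ℝ) (y : Fin n → ℝ) : ph κ y 0 = cc κ y := rfl

lemma ph_succ (κ : ℝ) (y : Fin n → ℝ) (k : Fin n) : ph κ y k.succ = y k := by
  simp [ph]

lemma ph_pos {κ : ℝ} (hκ : 0 < κ) (y : Fin n → ℝ) : 0 < ph κ y 0 := cc_pos hκ y

lemma sum_succ_eval (b : Fin n → ℝ) (x : Fin (n+1) → ℝ) (k : Fin n) :
    (∑ j, b j • ((x j.succ / x 0) • (Pi.single 0 1 : Fin (n+1) → ℝ)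
      + (Pi.single j.succ 1 : Fin (n+1) → ℝ))) k.succ = b k := by
  rw [Finset.sum_apply]
  have : ∀ j : Fin n, (b j • ((x j.succ / x 0) • (Pi.single 0 1 : Fin (n+1) → ℝ)
      + (Pi.single j.succ 1 : Fin (n+1) → ℝ))) k.succ
      = if k = j then b j else 0 := by
    intro j
    simp [Pi.single_apply, Fin.succ_ne_zero, Fin.succ_inj]
  rw [Finset.sum_congr rfl fun j _ => this j]
  simp

lemma sum_zero_eval (b : Fin n → ℝ) (x : Fin (n+1) → ℝ) :
    (∑ j, b j • ((x j.succ / x 0) • (Pi.single 0 1 : Fin (n+1) → ℝ)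
      + (Pi.single j.succ 1 : Fin (n+1) → ℝ))) 0 = ∑ j, b j * (x j.succ / x 0) := by
  rw [Finset.sum_apply]
  refine Finset.sum_congr rfl fun j _ => ?_
  simp [Pi.single_apply, (Fin.succ_ne_zero j).symm]

end Stmt3Aux

open Stmt3Aux

/-- In the hyperboloid model of `ℍⁿ₋κ` (the set `H` below, with Minkowski inner product
`m`), the Levi-Civita connection `D` of the induced metric is the tangential projection
`P` of the flat derivative, the static potential is `f = √κ x⁰`, and the conformal
Killing field is `X = √κ (x⁰ x − κ⁻¹ e₀)` (which is `r f ∂/∂r` in static coordinates).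
The twist covariant derivative is `D̃_ξ Z = D_ξ Z + (κ/f)⟨ξ,Z⟩X`.  A tangent vector
field `Z` satisfies `D̃ Z = 0` if and only if `Z = Σᵢ aᵢ ∂/∂xⁱ` for real constants `aᵢ`
in static coordinates, i.e. `Z(x) = Σⱼ aⱼ ((xʲ/x⁰) e₀ + eⱼ)` on the hyperboloid. -/
theorem stmt_3 {n : ℕ} (κ : ℝ) (hκ : 0 < κ)
    (Z : (Fin (n + 1) → ℝ) → (Fin (n + 1) → ℝ)) (hZ : ContDiff ℝ (⊤ : ℕ∞) Z) :
    let m : (Fin (n + 1) → ℝ) → (Fin (n + 1) → ℝ) → ℝ := fun v w =>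
      -(v 0 * w 0) + ∑ i : Fin n, v i.succ * w i.succ
    let H : Set (Fin (n + 1) → ℝ) := {x | m x x = -(1 / κ) ∧ 0 < x 0}
    let f : (Fin (n + 1) → ℝ) → ℝ := fun x => Real.sqrt κ * x 0
    let X : (Fin (n + 1) → ℝ) → (Fin (n + 1) → ℝ) := fun x =>
      Real.sqrt κ • (x 0 • x - κ⁻¹ • (Pi.single 0 1 : Fin (n + 1) → ℝ))
    let P : (Fin (n + 1) → ℝ) → (Fin (n + 1) → ℝ) → (Fin (n + 1) → ℝ) := fun x v =>
      v + (κ * m v x) • x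
    let Dt : (Fin (n + 1) → ℝ) → (Fin (n + 1) → ℝ) → (Fin (n + 1) → ℝ) := fun x ξ =>
      P x (fderiv ℝ Z x ξ) + ((κ / f x) * m ξ (Z x)) • X x
    (∀ x ∈ H, m x (Z x) = 0) →
      ((∀ x ∈ H, ∀ ξ, m x ξ = 0 → Dt x ξ = 0) ↔
        ∃ a : Fin n → ℝ, ∀ x ∈ H,
          Z x = ∑ j : Fin n,
            a j • ((x j.succ / x 0) • (Pi.single 0 1 : Fin (n + 1) → ℝ)
              + (Pi.single j.succ 1 : Fin (n + 1) → ℝ))) := by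
  intro m H f X P Dt hm
  have hκ1 : (1 : ℝ)/κ ≠ 0 := by positivity
  -- membership of the parametrization
  have hmemH : ∀ u : Fin n → ℝ, ph κ u ∈ H :=
    fun u => ⟨mk_ph hκ u, ph_pos hκ u⟩
  have hm' : ∀ u : Fin n → ℝ, mk (ph κ u) (Z (ph κ u)) = 0 :=
    fun u => hm (ph κ u) (hmemH u)
  -- every point of H is parametrized
  have hrepr : ∀ x ∈ H, ph κ (fun i => x i.succ) = x := by
    intro x hx
    have hx1 : mk x x = -(1/κ) := hx.1
    have hx2 : (0:ℝ) < x 0 := hx.2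
    funext i
    refine Fin.cases ?_ (fun k => ?_) i
    · rw [ph_zero]
      have hrad : 1/κ + ∑ i : Fin n, ((fun i : Fin n => x i.succ) i) ^ 2 = x 0 ^ 2 := by
        simp only [mk] at hx1
        have h2 : ∑ i : Fin n, ((fun i : Fin n => x i.succ) i) ^ 2
            = ∑ i : Fin n, x i.succ * x i.succ :=
          Finset.sum_congr rfl fun i _ => by ring
        rw [h2]
        nlinarith [hx1]
      rw [cc, hrad]
      exact Real.sqrt_sq hx2.le
    · rw [ph_succ]
  constructor
  · -- forward direction
    intro hD
    -- spatial derivatives vanish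
    have key : ∀ (u v : Fin n → ℝ) (j : Fin n),
        fderiv ℝ Z (ph κ u) (gd κ u v) j.succ = 0 := by
      intro u v j
      have htan : mk (ph κ u) (gd κ u v) = 0 := mk_ph_gd hκ u v
      have hDt : (fderiv ℝ Z (ph κ u) (gd κ u v)
            + (κ * mk (fderiv ℝ Z (ph κ u) (gd κ u v)) (ph κ u)) • ph κ u)
          + ((κ / (Real.sqrt κ * ph κ u 0)) * mk (gd κ u v) (Z (ph κ u))) •
            (Real.sqrt κ • (ph κ u 0 • ph κ u - κ⁻¹ • (Pi.single 0 1 : Fin (n+1) → ℝ)))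
          = 0 := hD (ph κ u) (hmemH u) (gd κ u v) htan
      have hmd : mk (ph κ u) (fderiv ℝ Z (ph κ u) (gd κ u v))
          = - mk (gd κ u v) (Z (ph κ u)) := by
        have h := tangency_deriv hZ hκ hm' u v 0
        simpa using h
      rw [Dt_eval hκ (ph κ u) (gd κ u v) (ph_pos hκ u) hmd] at hDt
      have h5 : fderiv ℝ Z (ph κ u) (gd κ u v)
          = (mk (gd κ u v) (Z (ph κ u)) / ph κ u 0) • (Pi.single 0 1 : Fin (n+1) → ℝ) :=
        sub_eq_zero.mp hDt
      have := congrFun h5 j.succ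
      simpa [Pi.single_apply, Fin.succ_ne_zero] using this
    -- spatial components are constant along radial curves
    have hconst : ∀ (y : Fin n → ℝ) (j : Fin n),
        Z (ph κ y) j.succ = Z (ph κ 0) j.succ := by
      intro y j
      have hdiff : ∀ t : ℝ,
          HasDerivAt (fun t => Z (ph κ ((0 : Fin n → ℝ) + t • y)) j.succ) 0 t := by
        intro t
        have h := hasDerivAt_pi.mp (chain hZ hκ 0 y t) j.succ
        rwa [key ((0 : Fin n → ℝ) + t • y) y j] at h
      have hfd : Differentiable ℝ (fun t : ℝ => Z (ph κ ((0 : Fin n → ℝ) + t • y)) j.succ) :=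
        fun t => (hdiff t).differentiableAt
      have h := is_const_of_deriv_eq_zero hfd (fun t => (hdiff t).deriv) 1 0
      simpa using h
    refine ⟨fun j => Z (ph κ 0) j.succ, ?_⟩
    intro x hx
    have hx2 : (0:ℝ) < x 0 := hx.2
    have hmx : mk x (Z x) = 0 := hm x hx
    have hxy := hrepr x hx
    have hZs : ∀ k : Fin n, Z x k.succ = Z (ph κ 0) k.succ := by
      intro k
      conv_lhs => rw [← hxy]
      exact hconst _ k
    funext i
    refine Fin.cases ?_ (fun k => ?_) i
    · rw [sum_zero_eval]
      simp only [mk] at hmx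
      have hx0 : x 0 ≠ 0 := hx2.ne'
      have hsum : ∑ i : Fin n, x i.succ * Z x i.succ
          = ∑ j : Fin n, Z (ph κ 0) j.succ * x j.succ :=
        Finset.sum_congr rfl fun i _ => by rw [hZs i]; ring
      have h1 : x 0 * Z x 0 = ∑ j : Fin n, Z (ph κ 0) j.succ * x j.succ := by
        rw [← hsum]; linarith [hmx]
      have h2 : ∑ j : Fin n, Z (ph κ 0) j.succ * (x j.succ / x 0)
          = (∑ j : Fin n, Z (ph κ 0) j.succ * x j.succ) / x 0 := by
        rw [Finset.sum_div]
        exact Finset.sum_congr rfl fun j _ => (mul_div_assoc _ _ _).symm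
      rw [h2, ← h1, mul_comm, mul_div_assoc, div_self hx0, mul_one]
    · rw [sum_succ_eval]
      exact hZs k
  · -- backward direction
    rintro ⟨a, hW⟩ x hx ξ hξ
    have hx2 : (0:ℝ) < x 0 := hx.2
    have hx0 : x 0 ≠ 0 := hx2.ne'
    set y : Fin n → ℝ := fun i => x i.succ with hy
    set v : Fin n → ℝ := fun i => ξ i.succ with hv
    have hxy : ph κ y = x := hrepr x hx
    have hcy : cc κ y = x 0 := by rw [← ph_zero κ y, hxy]
    have hξ' : mk x ξ = 0 := hξ
    have hgd : gd κ y v = ξ := by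
      funext i
      refine Fin.cases ?_ (fun k => ?_) i
      · show (∑ i, y i * v i) / cc κ y = ξ 0
        simp only [mk] at hξ'
        rw [hcy]
        have : ∑ i, y i * v i = ∑ i : Fin n, x i.succ * ξ i.succ := rfl
        rw [this]
        field_simp
        linarith [hξ']
      · show v k = ξ k.succ
        rfl
    have hZx : Z x = ∑ j, a j • ((x j.succ / x 0) • (Pi.single 0 1 : Fin (n+1) → ℝ)
        + (Pi.single j.succ 1 : Fin (n+1) → ℝ)) := hW x hx
    have hZx0 : Z x 0 = ∑ j, a j * (x j.succ / x 0) := by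
      rw [hZx]; exact sum_zero_eval a x
    have hZxs : ∀ k : Fin n, Z x k.succ = a k := by
      intro k; rw [hZx]; exact sum_succ_eval a x k
    -- compute m ξ (Z x)
    have hmkval : mk ξ (Z x) = -(ξ 0 * (∑ j, a j * x j.succ) / x 0) + ∑ j, ξ j.succ * a j := by
      simp only [mk]
      rw [hZx0]
      congr 1
      · have h2 : ∑ j : Fin n, a j * (x j.succ / x 0)
            = (∑ j : Fin n, a j * x j.succ) / x 0 := by
          rw [Finset.sum_div]
          exact Finset.sum_congr rfl fun j _ => (mul_div_assoc _ _ _).symm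
        rw [h2, mul_div_assoc]
      · exact Finset.sum_congr rfl fun j _ => by rw [hZxs j]
    -- the derivative of Z along the curve through x with velocity ξ
    have hform : HasDerivAt (fun t => Z (ph κ (y + t • v)))
        ((mk ξ (Z x) / x 0) • (Pi.single 0 1 : Fin (n+1) → ℝ)) (0:ℝ) := by
      have heq : (fun t : ℝ => Z (ph κ (y + t • v)))
          = fun t => ∑ j, a j • ((((y j + t * v j) / cc κ (y + t • v))
              • (Pi.single 0 1 : Fin (n+1) → ℝ))
            + (Pi.single j.succ 1 : Fin (n+1) → ℝ)) := by
        funext t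
        rw [hW (ph κ (y + t • v)) (hmemH _)]
        refine Finset.sum_congr rfl fun j _ => ?_
        rw [ph_succ, ph_zero]
        simp
      rw [heq, hasDerivAt_pi]
      intro i
      refine Fin.cases ?_ (fun k => ?_) i
      · have hf0 : (fun t : ℝ => (∑ j, a j • ((((y j + t * v j) / cc κ (y + t • v))
              • (Pi.single 0 1 : Fin (n+1) → ℝ))
            + (Pi.single j.succ 1 : Fin (n+1) → ℝ))) 0)
            = fun t : ℝ => (∑ j, a j * (y j + t * v j)) / cc κ (y + t • v) := by
          funext t
          rw [Finset.sum_apply, Finset.sum_div]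
          refine Finset.sum_congr rfl fun j _ => ?_
          simp [Pi.single_apply, (Fin.succ_ne_zero j).symm]
          ring
        rw [hf0]
        have hN : HasDerivAt (fun t : ℝ => ∑ j, a j * (y j + t * v j)) (∑ j, a j * v j) 0 := by
          refine HasDerivAt.fun_sum fun j _ => ?_
          have hb : HasDerivAt (fun t : ℝ => y j + t * v j) (v j) 0 := by
            simpa using ((hasDerivAt_id 0).mul_const (v j)).const_add (y j)
          simpa using hb.const_mul (a j)
        have hc : HasDerivAt (fun t : ℝ => cc κ (y + t • v)) (gd κ (y + (0:ℝ) • v) v 0) 0 :=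
          hasDerivAt_pi.mp (hasDerivAt_ph hκ y v 0) 0
        have hcc0 : cc κ (y + (0:ℝ) • v) = x 0 := by
          rw [show y + (0:ℝ) • v = y by simp, hcy]
        have hccne : cc κ (y + (0:ℝ) • v) ≠ 0 := by rw [hcc0]; exact hx0
        have hdiv := hN.fun_div hc hccne
        have hcc0' : (fun t : ℝ => cc κ (y + t • v)) 0 = x 0 := hcc0
        refine hdiv.congr_deriv ?_
        have hgd0 : gd κ (y + (0:ℝ) • v) v 0 = ξ 0 := by
          rw [show y + (0:ℝ) • v = y by simp, hgd]
        rw [hgd0, hcc0]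
        simp only [Pi.smul_apply, Pi.single_eq_same, smul_eq_mul, mul_one]
        have hy0 : ∑ j : Fin n, a j * (y j + 0 * v j) = ∑ j : Fin n, a j * x j.succ :=
          Finset.sum_congr rfl fun j _ => by simp [hy]
        have hv0 : ∑ j : Fin n, a j * v j = ∑ j : Fin n, a j * ξ j.succ := rfl
        rw [hy0, hv0, hmkval]
        have hvξ : ∑ j : Fin n, ξ j.succ * a j = ∑ j : Fin n, a j * ξ j.succ :=
          Finset.sum_congr rfl fun j _ => by ring
        rw [hvξ]
        field_simp
        ring
      · have hfk : (fun t : ℝ => (∑ j, a j • ((((y j + t * v j) / cc κ (y + t • v))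
              • (Pi.single 0 1 : Fin (n+1) → ℝ))
            + (Pi.single j.succ 1 : Fin (n+1) → ℝ))) k.succ)
            = fun _ : ℝ => a k := by
          funext t
          rw [Finset.sum_apply]
          have : ∀ j : Fin n, (a j • ((((y j + t * v j) / cc κ (y + t • v))
              • (Pi.single 0 1 : Fin (n+1) → ℝ))
            + (Pi.single j.succ 1 : Fin (n+1) → ℝ))) k.succ = if k = j then a j else 0 := by
            intro j
            simp [Pi.single_apply, Fin.succ_ne_zero, Fin.succ_inj]
          rw [Finset.sum_congr rfl fun j _ => this j]
          simp
        rw [hfk]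
        have hval : ((mk ξ (Z x) / x 0) • (Pi.single 0 1 : Fin (n+1) → ℝ)) k.succ = 0 := by
          simp [Pi.single_apply, Fin.succ_ne_zero]
        rw [hval]
        exact hasDerivAt_const 0 (a k)
    have hchain := chain hZ hκ y v 0
    rw [show y + (0:ℝ) • v = y by simp, hxy, hgd] at hchain
    have hZd : fderiv ℝ Z x ξ
        = (mk ξ (Z x) / x 0) • (Pi.single 0 1 : Fin (n+1) → ℝ) := hchain.unique hform
    have hmd : mk x (fderiv ℝ Z x ξ) = - mk ξ (Z x) := by
      rw [hZd]
      simp only [mk, Pi.smul_apply, smul_eq_mul, Pi.single_apply, Fin.succ_ne_zero]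
      simp [hx0]
      field_simp
      ring
    show (fderiv ℝ Z x ξ + (κ * mk (fderiv ℝ Z x ξ) x) • x)
        + ((κ / (Real.sqrt κ * x 0)) * mk ξ (Z x)) •
          (Real.sqrt κ • (x 0 • x - κ⁻¹ • (Pi.single 0 1 : Fin (n+1) → ℝ))) = 0
    rw [Dt_eval hκ x ξ hx2 hmd, hZd, sub_self]
end

section
/- The twist connection D̃ on the pull-back tangent bundle over a surface in ℍ³_{-κ} is flat: for any section Y and tangent vector fields e_a, e_b on the surface, D̃_{e_b} D̃_{e_a} Y − D̃_{e_a} D̃_{e_b} Y − D̃_{[e_b,e_a]} Y = 0. -/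
open Matrix


private lemma diff_i' {A : (Fin 2 → ℝ) → (Fin 3 → ℝ)} {u : Fin 2 → ℝ} (hA : DifferentiableAt ℝ A u)
    (i : Fin 3) : DifferentiableAt ℝ (fun u => A u i) u :=
  ((ContinuousLinearMap.proj i : (Fin 3 → ℝ) →L[ℝ] ℝ).differentiableAt).comp u hA

private lemma fderiv_i' {A : (Fin 2 → ℝ) → (Fin 3 → ℝ)} {u v : Fin 2 → ℝ}
    (hA : DifferentiableAt ℝ A u)
    (i : Fin 3) : fderiv ℝ (fun u => A u i) u v = fderiv ℝ A u v i := by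
  have := ((ContinuousLinearMap.proj i : (Fin 3 → ℝ) →L[ℝ] ℝ).hasFDerivAt.comp u
    hA.hasFDerivAt).fderiv
  rw [show (fun u => A u i) = (ContinuousLinearMap.proj i : (Fin 3 → ℝ) →L[ℝ] ℝ) ∘ A from rfl,
    this]
  rfl

private lemma fderiv_dot' {A B : (Fin 2 → ℝ) → (Fin 3 → ℝ)} {u v : Fin 2 → ℝ}
    (hA : DifferentiableAt ℝ A u) (hB : DifferentiableAt ℝ B u) :
    fderiv ℝ (fun u => A u ⬝ᵥ B u) u v = fderiv ℝ A u v ⬝ᵥ B u + A u ⬝ᵥ fderiv ℝ B u v := by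
  have h : (fun u => A u ⬝ᵥ B u) = fun u => ∑ i, A u i * B u i := by
    funext u; simp [dotProduct]
  rw [h, fderiv_fun_sum (A := fun i u => A u i * B u i) (fun i _ => (diff_i' hA i).mul (diff_i' hB i))]
  simp only [ContinuousLinearMap.coe_sum', Finset.sum_apply]
  rw [dotProduct, dotProduct, ← Finset.sum_add_distrib]
  refine Finset.sum_congr rfl fun i _ => ?_
  rw [fderiv_fun_mul (diff_i' hA i) (diff_i' hB i)]
  simp [fderiv_i' hA i, fderiv_i' hB i]
  ring

private lemma smooth_dot' {A B : (Fin 2 → ℝ) → (Fin 3 → ℝ)} (hA : ContDiff ℝ (⊤ : ℕ∞) A)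
    (hB : ContDiff ℝ (⊤ : ℕ∞) B) : ContDiff ℝ (⊤ : ℕ∞) (fun u => A u ⬝ᵥ B u) := by
  simp only [dotProduct]
  exact ContDiff.sum fun i _ => (contDiff_pi.mp hA i).mul (contDiff_pi.mp hB i)

private lemma smooth_cross' {A B : (Fin 2 → ℝ) → (Fin 3 → ℝ)} (hA : ContDiff ℝ (⊤ : ℕ∞) A)
    (hB : ContDiff ℝ (⊤ : ℕ∞) B) : ContDiff ℝ (⊤ : ℕ∞) (fun u => A u ⨯₃ B u) := by
  rw [contDiff_pi]
  intro i
  simp only [cross_apply]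
  fin_cases i <;> simp <;>
    exact ((contDiff_pi.mp hA _).mul (contDiff_pi.mp hB _)).sub
      ((contDiff_pi.mp hA _).mul (contDiff_pi.mp hB _))

private lemma smooth_fderiv_apply' {Y : (Fin 2 → ℝ) → (Fin 3 → ℝ)} {η : (Fin 2 → ℝ) → (Fin 2 → ℝ)}
    (hY : ContDiff ℝ (⊤ : ℕ∞) Y) (hη : ContDiff ℝ (⊤ : ℕ∞) η) :
    ContDiff ℝ (⊤ : ℕ∞) (fun u => fderiv ℝ Y u (η u)) :=
  (hY.fderiv_right (le_refl _)).clm_apply hη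

private lemma smooth_mulVec' {M : (Fin 2 → ℝ) → Matrix (Fin 3) (Fin 2) ℝ}
    {v : (Fin 2 → ℝ) → Fin 2 → ℝ}
    (hM : ∀ i j, ContDiff ℝ (⊤ : ℕ∞) fun u => M u i j) (hv : ContDiff ℝ (⊤ : ℕ∞) v) :
    ContDiff ℝ (⊤ : ℕ∞) (fun u => M u *ᵥ v u) := by
  rw [contDiff_pi]
  intro i
  simp only [mulVec, dotProduct]
  exact ContDiff.sum fun j _ => (hM i j).mul (contDiff_pi.mp hv j)

private lemma fderiv_invf' {f : (Fin 2 → ℝ) → ℝ} {u v : Fin 2 → ℝ}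
    (hf : DifferentiableAt ℝ f u) (h0 : f u ≠ 0) :
    fderiv ℝ (fun u => (f u)⁻¹) u v = -(fderiv ℝ f u v) / (f u) ^ 2 := by
  have h : (fun u => (f u)⁻¹) = (fun x : ℝ => x⁻¹) ∘ f := rfl
  rw [h, fderiv_comp u (differentiableAt_inv h0) hf]
  rw [show fderiv ℝ (fun x : ℝ => x⁻¹) (f u) = fderiv ℝ Inv.inv (f u) from rfl]
  rw [fderiv_inv]
  simp [div_eq_mul_inv]

/-- Let `r : S² → ℍ³₋κ` be an embedding, `E` the pull-back of the tangent bundle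
(trivialized over a coordinate chart `Fin 2 → ℝ`, so that sections are maps into
`Fin 3 → ℝ`, the differential of `r` is a matrix field `P`, and the pull-back
Levi-Civita connection is `D_ξ Z = ∂_ξ Z + (W *ᵥ ξ) ⨯₃ Z` for a connection form `W`),
`f` the static potential (`Df = κX`), `X = r f ∂/∂r` the conformal Killing field
(`D_ξ X = f dr(ξ)`), and suppose `D` has the constant curvature of `ℍ³₋κ`:
`R(U,V)Z = −κ⟨V,Z⟩U + κ⟨U,Z⟩V`.  Then the twist connection
`D̃_ξ Z = D_ξ Z + (κ/f)⟨dr(ξ), Z⟩ X` is flat: for any section `Y` and tangent vector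
fields `ξ, η`, `D̃_ξ D̃_η Y − D̃_η D̃_ξ Y − D̃_{[ξ,η]} Y = 0`. -/
theorem stmt_4 (κ : ℝ)
    (P W : (Fin 2 → ℝ) → Matrix (Fin 3) (Fin 2) ℝ)
    (f : (Fin 2 → ℝ) → ℝ) (X : (Fin 2 → ℝ) → (Fin 3 → ℝ))
    (hP : ∀ i j, ContDiff ℝ (⊤ : ℕ∞) fun u => P u i j)
    (hW : ∀ i j, ContDiff ℝ (⊤ : ℕ∞) fun u => W u i j)
    (hfs : ContDiff ℝ (⊤ : ℕ∞) f) (hfpos : ∀ u, 0 < f u) (hXs : ContDiff ℝ (⊤ : ℕ∞) X) :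
    let dr : ((Fin 2 → ℝ) → (Fin 2 → ℝ)) → (Fin 2 → ℝ) → (Fin 3 → ℝ) :=
      fun ξ u => P u *ᵥ ξ u
    let D : ((Fin 2 → ℝ) → (Fin 2 → ℝ)) → ((Fin 2 → ℝ) → (Fin 3 → ℝ)) →
        (Fin 2 → ℝ) → (Fin 3 → ℝ) :=
      fun ξ Z u => fderiv ℝ Z u (ξ u) + (W u *ᵥ ξ u) ⨯₃ Z u
    let Dt : ((Fin 2 → ℝ) → (Fin 2 → ℝ)) → ((Fin 2 → ℝ) → (Fin 3 → ℝ)) →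
        (Fin 2 → ℝ) → (Fin 3 → ℝ) :=
      fun ξ Z u => D ξ Z u + ((κ / f u) * (dr ξ u ⬝ᵥ Z u)) • X u
    let bracket : ((Fin 2 → ℝ) → (Fin 2 → ℝ)) → ((Fin 2 → ℝ) → (Fin 2 → ℝ)) →
        (Fin 2 → ℝ) → (Fin 2 → ℝ) :=
      fun ξ η u => fderiv ℝ η u (ξ u) - fderiv ℝ ξ u (η u)
    -- gradient of the static potential: Df = κX
    (∀ u v, fderiv ℝ f u v = κ * (X u ⬝ᵥ (P u *ᵥ v))) →
    -- X is conformal Killing: D_ξ X = f dr(ξ)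
    (∀ ξ u, D ξ X u = f u • dr ξ u) →
    -- torsion-freeness of the pull-back connection
    (∀ ξ η, ContDiff ℝ (⊤ : ℕ∞) ξ → ContDiff ℝ (⊤ : ℕ∞) η → ∀ u,
      D ξ (dr η) u - D η (dr ξ) u = dr (bracket ξ η) u) →
    -- constant curvature −κ of hyperbolic space
    (∀ ξ η Z, ContDiff ℝ (⊤ : ℕ∞) ξ → ContDiff ℝ (⊤ : ℕ∞) η → ContDiff ℝ (⊤ : ℕ∞) Z → ∀ u,
      D ξ (D η Z) u - D η (D ξ Z) u - D (bracket ξ η) Z u =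
        (-(κ * (dr η u ⬝ᵥ Z u))) • dr ξ u + (κ * (dr ξ u ⬝ᵥ Z u)) • dr η u) →
    -- conclusion: the twist connection is flat
    ∀ ξ η Y, ContDiff ℝ (⊤ : ℕ∞) ξ → ContDiff ℝ (⊤ : ℕ∞) η → ContDiff ℝ (⊤ : ℕ∞) Y → ∀ u,
      Dt ξ (Dt η Y) u - Dt η (Dt ξ Y) u - Dt (bracket ξ η) Y u = 0 := by
  intro dr D Dt bracket hDf hK hT hR ξ η Y hξ hη hY u
  have hf0 : ∀ x, f x ≠ 0 := fun x => (hfpos x).ne'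
  have hdr : ∀ ζ : (Fin 2 → ℝ) → (Fin 2 → ℝ), ContDiff ℝ (⊤ : ℕ∞) ζ → ContDiff ℝ (⊤ : ℕ∞) (dr ζ) :=
    fun ζ hζ => smooth_mulVec' hP hζ
  have hDsm : ∀ (ζ : (Fin 2 → ℝ) → (Fin 2 → ℝ)) (Z : (Fin 2 → ℝ) → (Fin 3 → ℝ)),
      ContDiff ℝ (⊤ : ℕ∞) ζ → ContDiff ℝ (⊤ : ℕ∞) Z → ContDiff ℝ (⊤ : ℕ∞) (D ζ Z) :=
    fun ζ Z hζ hZ => (smooth_fderiv_apply' hZ hζ).add (smooth_cross' (smooth_mulVec' hW hζ) hZ)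
  have hκf : ContDiff ℝ (⊤ : ℕ∞) (fun x => κ / f x) := contDiff_const.div hfs hf0
  have hcs : ∀ (ζ : (Fin 2 → ℝ) → (Fin 2 → ℝ)) (Z : (Fin 2 → ℝ) → (Fin 3 → ℝ)),
      ContDiff ℝ (⊤ : ℕ∞) ζ → ContDiff ℝ (⊤ : ℕ∞) Z →
      ContDiff ℝ (⊤ : ℕ∞) (fun x => (κ / f x) * (dr ζ x ⬝ᵥ Z x)) :=
    fun ζ Z hζ hZ => hκf.mul (smooth_dot' (hdr ζ hζ) hZ)
  have Dadd : ∀ (ζ : (Fin 2 → ℝ) → (Fin 2 → ℝ)) (Z₁ Z₂ : (Fin 2 → ℝ) → (Fin 3 → ℝ)),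
      DifferentiableAt ℝ Z₁ u → DifferentiableAt ℝ Z₂ u →
      D ζ (fun x => Z₁ x + Z₂ x) u = D ζ Z₁ u + D ζ Z₂ u := by
    intro ζ Z₁ Z₂ h1 h2
    show fderiv ℝ (fun x => Z₁ x + Z₂ x) u (ζ u) + (W u *ᵥ ζ u) ⨯₃ (Z₁ u + Z₂ u) =
      (fderiv ℝ Z₁ u (ζ u) + (W u *ᵥ ζ u) ⨯₃ Z₁ u) + (fderiv ℝ Z₂ u (ζ u) + (W u *ᵥ ζ u) ⨯₃ Z₂ u)
    rw [fderiv_fun_add h1 h2, map_add]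
    simp only [ContinuousLinearMap.add_apply]
    abel
  have Dsmul : ∀ (ζ : (Fin 2 → ℝ) → (Fin 2 → ℝ)) (c : (Fin 2 → ℝ) → ℝ)
      (Z : (Fin 2 → ℝ) → (Fin 3 → ℝ)),
      DifferentiableAt ℝ c u → DifferentiableAt ℝ Z u →
      D ζ (fun x => c x • Z x) u = fderiv ℝ c u (ζ u) • Z u + c u • D ζ Z u := by
    intro ζ c Z hc hZ
    show fderiv ℝ (fun x => c x • Z x) u (ζ u) + (W u *ᵥ ζ u) ⨯₃ (c u • Z u) =
      fderiv ℝ c u (ζ u) • Z u + c u • (fderiv ℝ Z u (ζ u) + (W u *ᵥ ζ u) ⨯₃ Z u)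
    rw [fderiv_fun_smul hc hZ, LinearMap.map_smul]
    simp only [ContinuousLinearMap.add_apply, ContinuousLinearMap.smul_apply,
      ContinuousLinearMap.smulRight_apply, smul_add]
    abel
  have metr : ∀ (ζ : (Fin 2 → ℝ) → (Fin 2 → ℝ)) (A B : (Fin 2 → ℝ) → (Fin 3 → ℝ)),
      ContDiff ℝ (⊤ : ℕ∞) A → ContDiff ℝ (⊤ : ℕ∞) B →
      fderiv ℝ (fun x => A x ⬝ᵥ B x) u (ζ u) = D ζ A u ⬝ᵥ B u + A u ⬝ᵥ D ζ B u := by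
    intro ζ A B hA hB
    rw [fderiv_dot' (hA.differentiable (by simp) u) (hB.differentiable (by simp) u)]
    show _ = (fderiv ℝ A u (ζ u) + (W u *ᵥ ζ u) ⨯₃ A u) ⬝ᵥ B u
      + A u ⬝ᵥ (fderiv ℝ B u (ζ u) + (W u *ᵥ ζ u) ⨯₃ B u)
    rw [add_dotProduct, dotProduct_add]
    have h1 : ((W u *ᵥ ζ u) ⨯₃ A u) ⬝ᵥ B u = (W u *ᵥ ζ u) ⬝ᵥ (A u ⨯₃ B u) := by
      rw [dotProduct_comm]; exact triple_product_permutation _ _ _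
    have h2 : A u ⬝ᵥ ((W u *ᵥ ζ u) ⨯₃ B u) = -((W u *ᵥ ζ u) ⬝ᵥ (A u ⨯₃ B u)) := by
      rw [triple_product_permutation, ← cross_anticomm, dotProduct_neg]
    rw [h1, h2]; ring
  have hkf : ∀ ζ : (Fin 2 → ℝ) → (Fin 2 → ℝ),
      fderiv ℝ (fun x => κ / f x) u (ζ u) = -(κ * (κ * (dr ζ u ⬝ᵥ X u))) / f u ^ 2 := by
    intro ζ
    have h : (fun x => κ / f x) = fun x => κ * (f x)⁻¹ := by
      funext x; rw [div_eq_mul_inv]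
    rw [h, fderiv_const_mul (a := fun x => (f x)⁻¹) ((hfs.differentiable (by simp) u).inv (hf0 u)) κ]
    simp only [ContinuousLinearMap.smul_apply, smul_eq_mul]
    rw [fderiv_invf' (hfs.differentiable (by simp) u) (hf0 u), hDf u (ζ u)]
    show κ * (-(κ * (X u ⬝ᵥ (P u *ᵥ ζ u))) / f u ^ 2)
      = -(κ * (κ * ((P u *ᵥ ζ u) ⬝ᵥ X u))) / f u ^ 2
    rw [dotProduct_comm]
    ring
  have key : ∀ ζ₁ ζ₂ : (Fin 2 → ℝ) → (Fin 2 → ℝ), ContDiff ℝ (⊤ : ℕ∞) ζ₁ → ContDiff ℝ (⊤ : ℕ∞) ζ₂ →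
      Dt ζ₁ (Dt ζ₂ Y) u =
        D ζ₁ (D ζ₂ Y) u
        + (((κ / f u) * (D ζ₁ (dr ζ₂) u ⬝ᵥ Y u + dr ζ₂ u ⬝ᵥ D ζ₁ Y u)
            + (dr ζ₂ u ⬝ᵥ Y u) * (-(κ * (κ * (dr ζ₁ u ⬝ᵥ X u))) / f u ^ 2)) • X u
          + ((κ / f u) * (dr ζ₂ u ⬝ᵥ Y u) * f u) • dr ζ₁ u)
        + ((κ / f u) * (dr ζ₁ u ⬝ᵥ D ζ₂ Y u
            + (κ / f u) * (dr ζ₂ u ⬝ᵥ Y u) * (dr ζ₁ u ⬝ᵥ X u))) • X u := by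
    intro ζ₁ ζ₂ h1 h2
    have e0 : Dt ζ₁ (Dt ζ₂ Y) u
        = D ζ₁ (Dt ζ₂ Y) u + ((κ / f u) * (dr ζ₁ u ⬝ᵥ Dt ζ₂ Y u)) • X u := rfl
    have e1 : D ζ₁ (Dt ζ₂ Y) u = D ζ₁ (D ζ₂ Y) u
        + D ζ₁ (fun x => ((κ / f x) * (dr ζ₂ x ⬝ᵥ Y x)) • X x) u :=
      Dadd ζ₁ (D ζ₂ Y) (fun x => ((κ / f x) * (dr ζ₂ x ⬝ᵥ Y x)) • X x)
        ((hDsm ζ₂ Y h2 hY).differentiable (by simp) u)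
        (((hcs ζ₂ Y h2 hY).smul hXs).differentiable (by simp) u)
    have e2 : D ζ₁ (fun x => ((κ / f x) * (dr ζ₂ x ⬝ᵥ Y x)) • X x) u
        = fderiv ℝ (fun x => (κ / f x) * (dr ζ₂ x ⬝ᵥ Y x)) u (ζ₁ u) • X u
          + ((κ / f u) * (dr ζ₂ u ⬝ᵥ Y u)) • D ζ₁ X u :=
      Dsmul ζ₁ _ X ((hcs ζ₂ Y h2 hY).differentiable (by simp) u)
        (hXs.differentiable (by simp) u)
    have e3 : fderiv ℝ (fun x => (κ / f x) * (dr ζ₂ x ⬝ᵥ Y x)) u (ζ₁ u)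
        = (κ / f u) * (D ζ₁ (dr ζ₂) u ⬝ᵥ Y u + dr ζ₂ u ⬝ᵥ D ζ₁ Y u)
          + (dr ζ₂ u ⬝ᵥ Y u) * (-(κ * (κ * (dr ζ₁ u ⬝ᵥ X u))) / f u ^ 2) := by
      rw [fderiv_fun_mul ((hκf.differentiable (by simp)) u)
        ((smooth_dot' (hdr ζ₂ h2) hY).differentiable (by simp) u)]
      simp only [ContinuousLinearMap.add_apply, ContinuousLinearMap.smul_apply, smul_eq_mul]
      rw [metr ζ₁ (dr ζ₂) Y (hdr ζ₂ h2) hY, hkf ζ₁]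
    have e4 : D ζ₁ X u = f u • dr ζ₁ u := hK ζ₁ u
    have e5 : dr ζ₁ u ⬝ᵥ Dt ζ₂ Y u
        = dr ζ₁ u ⬝ᵥ D ζ₂ Y u + (κ / f u) * (dr ζ₂ u ⬝ᵥ Y u) * (dr ζ₁ u ⬝ᵥ X u) := by
      show dr ζ₁ u ⬝ᵥ (D ζ₂ Y u + ((κ / f u) * (dr ζ₂ u ⬝ᵥ Y u)) • X u) = _
      rw [dotProduct_add, dotProduct_smul, smul_eq_mul]
    rw [e0, e1, e2, e3, e4, e5]
    rw [smul_smul]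
  have hbr : dr (bracket ξ η) u = D ξ (dr η) u - D η (dr ξ) u := (hT ξ η hξ hη u).symm
  have hDD : D ξ (D η Y) u = D η (D ξ Y) u + D (bracket ξ η) Y u
      + ((-(κ * (dr η u ⬝ᵥ Y u))) • dr ξ u + (κ * (dr ξ u ⬝ᵥ Y u)) • dr η u) := by
    have h := hR ξ η Y hξ hη hY u
    rw [sub_sub, sub_eq_iff_eq_add] at h
    rw [h]; abel
  have e6 : Dt (bracket ξ η) Y u = D (bracket ξ η) Y u
      + ((κ / f u) * (D ξ (dr η) u ⬝ᵥ Y u - D η (dr ξ) u ⬝ᵥ Y u)) • X u := by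
    show D (bracket ξ η) Y u + ((κ / f u) * (dr (bracket ξ η) u ⬝ᵥ Y u)) • X u = _
    rw [hbr, sub_dotProduct]
  rw [key ξ η hξ hη, key η ξ hη hξ, e6, hDD]
  have hfu : f u ≠ 0 := hf0 u
  match_scalars <;> field_simp <;> ring
end

section
/- Let τ be an infinitesimal isometric deformation of a surface in ℍ³_{-κ} (i.e. DX ⊙ Dτ = 0). Then there exists a section Y of the pull-back bundle (the rotation vector) such that D̃(τ/f) = Y × DX, where × is the fiberwise cross product and D̃ the twist connection. -/
open Matrix

private lemma dot_self_ne_zero_aux {v : Fin 3 → ℝ} (hv : v ≠ 0) : v ⬝ᵥ v ≠ 0 := by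
  intro h
  apply hv
  have h' : v 0 ^ 2 + v 1 ^ 2 + v 2 ^ 2 = 0 := by
    simpa [dotProduct, Fin.sum_univ_three, sq] using h
  have e0 : v 0 = 0 := by nlinarith [sq_nonneg (v 0), sq_nonneg (v 1), sq_nonneg (v 2)]
  have e1 : v 1 = 0 := by nlinarith [sq_nonneg (v 0), sq_nonneg (v 1), sq_nonneg (v 2)]
  have e2 : v 2 = 0 := by nlinarith [sq_nonneg (v 0), sq_nonneg (v 1), sq_nonneg (v 2)]
  funext i
  fin_cases i
  · exact e0
  · exact e1
  · exact e2

private lemma cross_ne_zero_of_li_aux {a b : Fin 3 → ℝ} (h : LinearIndependent ℝ ![a, b]) :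
    a ⨯₃ b ≠ 0 := by
  intro hc
  rw [linearIndependent_fin2] at h
  obtain ⟨hb, h2⟩ := h
  simp only [Matrix.cons_val_one, Matrix.head_cons, Matrix.cons_val_zero] at hb h2
  have hbb : b ⬝ᵥ b ≠ 0 := dot_self_ne_zero_aux hb
  apply h2 ((a ⬝ᵥ b) / (b ⬝ᵥ b))
  have h0 := congrFun hc 0
  have h1 := congrFun hc 1
  have h2' := congrFun hc 2
  simp only [cross_apply, Matrix.cons_val_zero, Matrix.cons_val_one, Matrix.head_cons,
    Matrix.cons_val_two, Matrix.tail_cons, Pi.zero_apply] at h0 h1 h2'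
  simp only [dotProduct, Fin.sum_univ_three] at hbb
  have key : ∀ i, (a 0 * b 0 + a 1 * b 1 + a 2 * b 2)
      / (b 0 * b 0 + b 1 * b 1 + b 2 * b 2) * b i = a i := by
    intro i
    rw [div_mul_eq_mul_div, div_eq_iff hbb]
    fin_cases i <;> simp only [Fin.zero_eta, Fin.mk_one, Fin.reduceFinMk]
    · linear_combination (-(b 1) : ℝ) * h2' + b 2 * h1
    · linear_combination (b 0 : ℝ) * h2' - b 2 * h0
    · linear_combination (-(b 0) : ℝ) * h1 + b 1 * h0
  funext i
  simpa [dotProduct, Fin.sum_univ_three] using key i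

private lemma exists_rot_aux (e₀ e₁ v₀ v₁ : Fin 3 → ℝ) (hn : e₀ ⨯₃ e₁ ≠ 0)
    (h00 : v₀ ⬝ᵥ e₀ = 0) (h11 : v₁ ⬝ᵥ e₁ = 0) (h01 : v₀ ⬝ᵥ e₁ + v₁ ⬝ᵥ e₀ = 0) :
    ∃ y : Fin 3 → ℝ, v₀ = y ⨯₃ e₀ ∧ v₁ = y ⨯₃ e₁ := by
  set n : Fin 3 → ℝ := e₀ ⨯₃ e₁ with hndef
  have hs : n ⬝ᵥ n ≠ 0 := dot_self_ne_zero_aux hn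
  refine ⟨(n ⬝ᵥ n)⁻¹ • ((v₁ ⬝ᵥ n) • e₀ - (v₀ ⬝ᵥ n) • e₁ + (v₀ ⬝ᵥ e₁) • n), ?_, ?_⟩ <;>
  · rw [_root_.map_smul, LinearMap.smul_apply, eq_comm, inv_smul_eq_iff₀ hs]
    simp only [hndef, cross_apply, dotProduct, Fin.sum_univ_three] at h00 h11 h01 ⊢
    funext i
    simp only [Pi.add_apply, Pi.sub_apply, Pi.smul_apply, smul_eq_mul,
      Matrix.cons_val_zero, Matrix.cons_val_one, Matrix.head_cons, Matrix.cons_val_two,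
      Matrix.tail_cons]
    fin_cases i <;>
      simp only [Fin.zero_eta, Fin.mk_one, Fin.reduceFinMk, Matrix.cons_val_zero,
        Matrix.cons_val_one, Matrix.head_cons, Matrix.cons_val_two, Matrix.tail_cons,
        Pi.add_apply, Pi.sub_apply, Pi.smul_apply, smul_eq_mul] <;>
      first
      | linear_combination (-((e₁ 0^2+e₁ 1^2+e₁ 2^2) * e₀ 0 - (e₀ 0*e₁ 0+e₀ 1*e₁ 1+e₀ 2*e₁ 2) * e₁ 0)) * h00
      | linear_combination (-((e₁ 0^2+e₁ 1^2+e₁ 2^2) * e₀ 1 - (e₀ 0*e₁ 0+e₀ 1*e₁ 1+e₀ 2*e₁ 2) * e₁ 1)) * h00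
      | linear_combination (-((e₁ 0^2+e₁ 1^2+e₁ 2^2) * e₀ 2 - (e₀ 0*e₁ 0+e₀ 1*e₁ 1+e₀ 2*e₁ 2) * e₁ 2)) * h00
      | linear_combination (-(e₁ 0^2+e₁ 1^2+e₁ 2^2) * e₀ 0 + (e₀ 0*e₁ 0+e₀ 1*e₁ 1+e₀ 2*e₁ 2) * e₁ 0) * h01 + ((e₀ 0*e₁ 0+e₀ 1*e₁ 1+e₀ 2*e₁ 2) * e₀ 0 - (e₀ 0^2+e₀ 1^2+e₀ 2^2) * e₁ 0) * h11
      | linear_combination (-(e₁ 0^2+e₁ 1^2+e₁ 2^2) * e₀ 1 + (e₀ 0*e₁ 0+e₀ 1*e₁ 1+e₀ 2*e₁ 2) * e₁ 1) * h01 + ((e₀ 0*e₁ 0+e₀ 1*e₁ 1+e₀ 2*e₁ 2) * e₀ 1 - (e₀ 0^2+e₀ 1^2+e₀ 2^2) * e₁ 1) * h11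
      | linear_combination (-(e₁ 0^2+e₁ 1^2+e₁ 2^2) * e₀ 2 + (e₀ 0*e₁ 0+e₀ 1*e₁ 1+e₀ 2*e₁ 2) * e₁ 2) * h01 + ((e₀ 0*e₁ 0+e₀ 1*e₁ 1+e₀ 2*e₁ 2) * e₀ 2 - (e₀ 0^2+e₀ 1^2+e₀ 2^2) * e₁ 2) * h11

/-- Let `Σ = r(S²) ⊂ ℍ³₋κ`, with pull-back tangent bundle trivialized over a coordinate
chart (sections are maps `Fin 2 → ℝ → Fin 3 → ℝ`, with fiberwise dot and cross product),
pull-back metric connection `D_a Z = ∂_a Z + ω_a ×₃ Z`, coordinate tangent images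
`R a = dr(∂_a)`, static potential `f` (`∂_a f = κ⟨X, R a⟩`), conformal Killing field `X`
(`D_a X = f R a`), and twist connection `D̃_a Z = D_a Z + (κ/f)⟨R a, Z⟩X`.
If `τ` is an infinitesimal isometric deformation, i.e.
`⟨D_a τ, R b⟩ + ⟨D_b τ, R a⟩ = 0`, then there exists a rotation vector `Y` with
`D̃(τ/f) = Y × DX`. -/
theorem stmt_6 (κ : ℝ)
    (W : (Fin 2 → ℝ) → Matrix (Fin 3) (Fin 2) ℝ)
    (R : Fin 2 → (Fin 2 → ℝ) → (Fin 3 → ℝ))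
    (f : (Fin 2 → ℝ) → ℝ) (X τ : (Fin 2 → ℝ) → (Fin 3 → ℝ))
    (hW : ∀ i j, ContDiff ℝ (⊤ : ℕ∞) fun u => W u i j)
    (hR : ∀ a, ContDiff ℝ (⊤ : ℕ∞) (R a))
    (hfs : ContDiff ℝ (⊤ : ℕ∞) f) (hfpos : ∀ u, 0 < f u)
    (hXs : ContDiff ℝ (⊤ : ℕ∞) X) (hτs : ContDiff ℝ (⊤ : ℕ∞) τ) :
    let D : Fin 2 → ((Fin 2 → ℝ) → (Fin 3 → ℝ)) → (Fin 2 → ℝ) → (Fin 3 → ℝ) :=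
      fun a Z u => fderiv ℝ Z u (Pi.single a 1) + (W u *ᵥ Pi.single a 1) ⨯₃ Z u
    let Dt : Fin 2 → ((Fin 2 → ℝ) → (Fin 3 → ℝ)) → (Fin 2 → ℝ) → (Fin 3 → ℝ) :=
      fun a Z u => D a Z u + ((κ / f u) * (R a u ⬝ᵥ Z u)) • X u
    -- gradient of the static potential: Df = κX
    (∀ u a, fderiv ℝ f u (Pi.single a 1) = κ * (X u ⬝ᵥ R a u)) →
    -- X is conformal Killing: D_a X = f R a
    (∀ u a, D a X u = f u • R a u) →
    -- r is an immersion
    (∀ u, LinearIndependent ℝ ![R 0 u, R 1 u]) →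
    -- τ is an infinitesimal isometric deformation: DX ⊙ Dτ = 0
    (∀ u a b, (D a τ u ⬝ᵥ R b u) + (D b τ u ⬝ᵥ R a u) = 0) →
    -- conclusion: existence of the rotation vector Y with D̃(τ/f) = Y × DX
    ∃ Y : (Fin 2 → ℝ) → (Fin 3 → ℝ), ∀ u a,
      Dt a (fun v => (f v)⁻¹ • τ v) u = Y u ⨯₃ D a X u := by
  intro D Dt hdf hDX hInd hIso
  set σ : (Fin 2 → ℝ) → (Fin 3 → ℝ) := fun v => (f v)⁻¹ • τ v with hσdef
  have hfd : ∀ u, HasFDerivAt f (fderiv ℝ f u) u :=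
    fun u => (hfs.differentiable (by simp) u).hasFDerivAt
  have hτd : ∀ u, HasFDerivAt τ (fderiv ℝ τ u) u :=
    fun u => (hτs.differentiable (by simp) u).hasFDerivAt
  have hσd : ∀ u, HasFDerivAt σ
      ((f u)⁻¹ • fderiv ℝ τ u + (-(f u ^ 2)⁻¹ • fderiv ℝ f u).smulRight (τ u)) u :=
    fun u => ((hasDerivAt_inv (hfpos u).ne').comp_hasFDerivAt u (hfd u)).smul (hτd u)
  have hform : ∀ u a, Dt a σ u = (f u)⁻¹ • D a τ u
      + ((κ / (f u) ^ 2) * (R a u ⬝ᵥ τ u)) • X u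
      - ((κ / (f u) ^ 2) * (X u ⬝ᵥ R a u)) • τ u := by
    intro u a
    have h1 : fderiv ℝ σ u (Pi.single a 1)
        = (f u)⁻¹ • fderiv ℝ τ u (Pi.single a 1)
          + (-(f u ^ 2)⁻¹ * (κ * (X u ⬝ᵥ R a u))) • τ u := by
      rw [(hσd u).fderiv]
      simp [hdf u a]
    simp only [Dt, D, hσdef]
    rw [h1]
    have h2 : (W u *ᵥ Pi.single a 1) ⨯₃ ((f u)⁻¹ • τ u)
        = (f u)⁻¹ • ((W u *ᵥ Pi.single a 1) ⨯₃ τ u) :=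
      _root_.map_smul (crossProduct (W u *ᵥ Pi.single a 1)) _ _
    rw [h2, dotProduct_smul]
    have hf0 : f u ≠ 0 := (hfpos u).ne'
    match_scalars <;> field_simp
    all_goals (rw [smul_eq_mul]; field_simp)
  have hcon : ∀ u a b, (Dt a σ u ⬝ᵥ R b u) + (Dt b σ u ⬝ᵥ R a u) = 0 := by
    intro u a b
    rw [hform u a, hform u b]
    simp only [sub_dotProduct, add_dotProduct, smul_dotProduct, smul_eq_mul]
    rw [dotProduct_comm (R a u) (τ u), dotProduct_comm (R b u) (τ u)]
    linear_combination (f u)⁻¹ * (hIso u a b)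
  have hcone : ∀ u a b, (Dt a σ u ⬝ᵥ D b X u) + (Dt b σ u ⬝ᵥ D a X u) = 0 := by
    intro u a b
    rw [hDX u a, hDX u b, dotProduct_smul, dotProduct_smul]
    have := hcon u a b
    simp only [smul_eq_mul]
    linear_combination f u * this
  have hex : ∀ u, ∃ y : Fin 3 → ℝ,
      Dt 0 σ u = y ⨯₃ D 0 X u ∧ Dt 1 σ u = y ⨯₃ D 1 X u := by
    intro u
    have hcross : D 0 X u ⨯₃ D 1 X u ≠ 0 := by
      rw [hDX u 0, hDX u 1]
      have e1 : (f u • R 0 u) ⨯₃ (f u • R 1 u) = f u • (f u • (R 0 u ⨯₃ R 1 u)) := by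
        rw [_root_.map_smul crossProduct, LinearMap.smul_apply, _root_.map_smul]
      rw [e1]
      exact smul_ne_zero (hfpos u).ne'
        (smul_ne_zero (hfpos u).ne' (cross_ne_zero_of_li_aux (hInd u)))
    have h00 : Dt 0 σ u ⬝ᵥ D 0 X u = 0 := by
      have := hcone u 0 0; linarith
    have h11 : Dt 1 σ u ⬝ᵥ D 1 X u = 0 := by
      have := hcone u 1 1; linarith
    exact exists_rot_aux _ _ _ _ hcross h00 h11 (hcone u 0 1)
  choose Y hY using hex
  refine ⟨Y, fun u a => ?_⟩
  fin_cases a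
  · exact (hY u).1
  · exact (hY u).2
end

section
/- For the trivial infinitesimal deformation τ = Y₀ × X + f Z₀ on a surface in ℍ³_{-κ}, where Y₀ and Z₀ are constant vector fields (D̃Y₀ = D̃Z₀ = 0), the rotation vector Y defined by D̃(τ/f) = Y × DX equals Y = f^{-3}( Y₀ + κ⟨Y₀, X⟩ X ). -/
open Matrix

open ContinuousLinearMap
noncomputable def crossL : (Fin 3 → ℝ) →L[ℝ] (Fin 3 → ℝ) →L[ℝ] (Fin 3 → ℝ) :=
  LinearMap.toContinuousLinearMap
    ((LinearMap.toContinuousLinearMap.toLinearMap).comp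
      (crossProduct : (Fin 3 → ℝ) →ₗ[ℝ] _))

@[simp] lemma crossL_apply (x y : Fin 3 → ℝ) : crossL x y = x ⨯₃ y := by
  simp [crossL]

@[simp] lemma cross_c0 (a b : Fin 3 → ℝ) : (a ⨯₃ b) 0 = a 1 * b 2 - a 2 * b 1 := by
  simp [cross_apply]

@[simp] lemma cross_c1 (a b : Fin 3 → ℝ) : (a ⨯₃ b) 1 = a 2 * b 0 - a 0 * b 2 := by
  simp [cross_apply]

@[simp] lemma cross_c2 (a b : Fin 3 → ℝ) : (a ⨯₃ b) 2 = a 0 * b 1 - a 1 * b 0 := by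
  simp [cross_apply]

set_option maxHeartbeats 1000000 in
/-- Setup as in the rotation-vector lemma: a surface `Σ ⊂ ℍ³₋κ` with pull-back tangent
bundle trivialized over a coordinate chart, pull-back metric connection
`D_a Z = ∂_a Z + ω_a ⨯₃ Z`, coordinate tangent images `R a = dr(∂_a)`, static potential
`f` with `Df = κX` and `κ|X|² = f² − 1`, conformal Killing field `X` with `D_a X = f R a`,
and twist connection `D̃_a Z = D_a Z + (κ/f)⟨R a, Z⟩X`.
For the trivial infinitesimal deformation `τ = Y₀ × X + f Z₀`, where `Y₀, Z₀` are
constant (`D̃Y₀ = D̃Z₀ = 0`), the rotation vector `Y` defined by `D̃(τ/f) = Y × DX`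
equals `Y = f⁻³ (Y₀ + κ⟨Y₀,X⟩X)`. -/
theorem stmt_7 (κ : ℝ)
    (W : (Fin 2 → ℝ) → Matrix (Fin 3) (Fin 2) ℝ)
    (R : Fin 2 → (Fin 2 → ℝ) → (Fin 3 → ℝ))
    (f : (Fin 2 → ℝ) → ℝ) (X Y₀ Z₀ : (Fin 2 → ℝ) → (Fin 3 → ℝ))
    (hW : ∀ i j, ContDiff ℝ (⊤ : ℕ∞) fun u => W u i j)
    (hR : ∀ a, ContDiff ℝ (⊤ : ℕ∞) (R a))
    (hfs : ContDiff ℝ (⊤ : ℕ∞) f) (hfpos : ∀ u, 0 < f u)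
    (hXs : ContDiff ℝ (⊤ : ℕ∞) X) (hY₀s : ContDiff ℝ (⊤ : ℕ∞) Y₀) (hZ₀s : ContDiff ℝ (⊤ : ℕ∞) Z₀) :
    let D : Fin 2 → ((Fin 2 → ℝ) → (Fin 3 → ℝ)) → (Fin 2 → ℝ) → (Fin 3 → ℝ) :=
      fun a Z u => fderiv ℝ Z u (Pi.single a 1) + (W u *ᵥ Pi.single a 1) ⨯₃ Z u
    let Dt : Fin 2 → ((Fin 2 → ℝ) → (Fin 3 → ℝ)) → (Fin 2 → ℝ) → (Fin 3 → ℝ) :=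
      fun a Z u => D a Z u + ((κ / f u) * (R a u ⬝ᵥ Z u)) • X u
    -- gradient of the static potential: Df = κX
    (∀ u a, fderiv ℝ f u (Pi.single a 1) = κ * (X u ⬝ᵥ R a u)) →
    -- X is conformal Killing: D_a X = f R a
    (∀ u a, D a X u = f u • R a u) →
    -- κ|X|² = f² − 1
    (∀ u, κ * (X u ⬝ᵥ X u) = (f u) ^ 2 - 1) →
    -- Y₀ and Z₀ are constant vector fields
    (∀ u a, Dt a Y₀ u = 0) → (∀ u a, Dt a Z₀ u = 0) →
    -- conclusion: the rotation vector of τ = Y₀ × X + f Z₀ is f⁻³(Y₀ + κ⟨Y₀,X⟩X)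
    ∀ u a,
      Dt a (fun v => (f v)⁻¹ • (Y₀ v ⨯₃ X v + f v • Z₀ v)) u =
        (((f u) ^ 3)⁻¹ • (Y₀ u + (κ * (Y₀ u ⬝ᵥ X u)) • X u)) ⨯₃ D a X u := by
  intro D Dt hdf hDX hfX hY0 hZ0 u a
  have hDX' : ∀ u a, fderiv ℝ X u (Pi.single a 1) + (W u *ᵥ Pi.single a 1) ⨯₃ X u
      = f u • R a u := hDX
  have hY0' : ∀ u a, fderiv ℝ Y₀ u (Pi.single a 1) + (W u *ᵥ Pi.single a 1) ⨯₃ Y₀ u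
      + ((κ / f u) * (R a u ⬝ᵥ Y₀ u)) • X u = 0 := hY0
  have hZ0' : ∀ u a, fderiv ℝ Z₀ u (Pi.single a 1) + (W u *ᵥ Pi.single a 1) ⨯₃ Z₀ u
      + ((κ / f u) * (R a u ⬝ᵥ Z₀ u)) • X u = 0 := hZ0
  have hF := hfpos u
  have hfd : HasFDerivAt f (fderiv ℝ f u) u := ((hfs.differentiable (by simp)) u).hasFDerivAt
  have hXd : HasFDerivAt X (fderiv ℝ X u) u := ((hXs.differentiable (by simp)) u).hasFDerivAt
  have hYd : HasFDerivAt Y₀ (fderiv ℝ Y₀ u) u := ((hY₀s.differentiable (by simp)) u).hasFDerivAt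
  have hZd : HasFDerivAt Z₀ (fderiv ℝ Z₀ u) u := ((hZ₀s.differentiable (by simp)) u).hasFDerivAt
  have hinv : HasFDerivAt (fun v => (f v)⁻¹) ((-((f u) ^ 2)⁻¹) • fderiv ℝ f u) u :=
    (hasDerivAt_inv hF.ne').comp_hasFDerivAt u hfd
  have hcross : HasFDerivAt (fun v => crossL (Y₀ v) (X v))
      (crossL.precompR (Fin 2 → ℝ) (Y₀ u) (fderiv ℝ X u)
        + crossL.precompL (Fin 2 → ℝ) (fderiv ℝ Y₀ u) (X u)) u :=
    crossL.hasFDerivAt_of_bilinear hYd hXd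
  have hG : HasFDerivAt (fun v => (f v)⁻¹ • (crossL (Y₀ v) (X v)) + Z₀ v)
      (((f u)⁻¹ • (crossL.precompR (Fin 2 → ℝ) (Y₀ u) (fderiv ℝ X u)
        + crossL.precompL (Fin 2 → ℝ) (fderiv ℝ Y₀ u) (X u))
        + ((-((f u) ^ 2)⁻¹) • fderiv ℝ f u).smulRight (crossL (Y₀ u) (X u)))
        + fderiv ℝ Z₀ u) u :=
    (hinv.smul hcross).add hZd
  have hfun : (fun v => (f v)⁻¹ • (Y₀ v ⨯₃ X v + f v • Z₀ v))
      = fun v => (f v)⁻¹ • (crossL (Y₀ v) (X v)) + Z₀ v := by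
    funext v
    rw [crossL_apply, smul_add, smul_smul, inv_mul_cancel₀ (hfpos v).ne', one_smul]
  have hXe : fderiv ℝ X u (Pi.single a 1)
      = f u • R a u - (W u *ᵥ Pi.single a 1) ⨯₃ X u := eq_sub_of_add_eq (hDX' u a)
  have hYe : fderiv ℝ Y₀ u (Pi.single a 1)
      = -(((κ / f u) * (R a u ⬝ᵥ Y₀ u)) • X u) - (W u *ᵥ Pi.single a 1) ⨯₃ Y₀ u :=
    eq_sub_of_add_eq (eq_neg_of_add_eq_zero_left (hY0' u a))
  have hZe : fderiv ℝ Z₀ u (Pi.single a 1)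
      = -(((κ / f u) * (R a u ⬝ᵥ Z₀ u)) • X u) - (W u *ᵥ Pi.single a 1) ⨯₃ Z₀ u :=
    eq_sub_of_add_eq (eq_neg_of_add_eq_zero_left (hZ0' u a))
  show fderiv ℝ (fun v => (f v)⁻¹ • (Y₀ v ⨯₃ X v + f v • Z₀ v)) u (Pi.single a 1)
      + (W u *ᵥ Pi.single a 1) ⨯₃ ((f u)⁻¹ • (Y₀ u ⨯₃ X u + f u • Z₀ u))
      + ((κ / f u) * (R a u ⬝ᵥ ((f u)⁻¹ • (Y₀ u ⨯₃ X u + f u • Z₀ u)))) • X u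
      = (((f u) ^ 3)⁻¹ • (Y₀ u + (κ * (Y₀ u ⬝ᵥ X u)) • X u)) ⨯₃
        (fderiv ℝ X u (Pi.single a 1) + (W u *ᵥ Pi.single a 1) ⨯₃ X u)
  rw [hfun, hG.fderiv]
  simp only [ContinuousLinearMap.add_apply, coe_smul', Pi.smul_apply, precompR_apply, precompL_apply,
    smulRight_apply, crossL_apply, hXe, hYe, hZe, hdf u a, hDX' u a]
  simp only [ContinuousLinearMap.compL_apply, ContinuousLinearMap.coe_comp',
    Function.comp_apply, hXe, crossL_apply]
  have h2 : f u ^ 2 = 1 + κ * (X u 0 * X u 0 + X u 1 * X u 1 + X u 2 * X u 2) := by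
    have h := hfX u
    simp only [dotProduct, Fin.sum_univ_three] at h
    linarith
  have hcomp : ∀ (v w : Fin 3 → ℝ), v 0 = w 0 → v 1 = w 1 → v 2 = w 2 → v = w := by
    intro v w g0 g1 g2
    funext i
    fin_cases i
    · exact g0
    · exact g1
    · exact g2
  refine hcomp _ _ ?_ ?_ ?_
  · simp only [cross_c0, cross_c1, cross_c2, dotProduct, Fin.sum_univ_three,
      Pi.smul_apply, smul_eq_mul, Pi.add_apply, Pi.sub_apply, Pi.neg_apply,
      Matrix.mulVec_single, Matrix.replicateCol_apply, mul_one]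
    field_simp
    linear_combination (f u * (Y₀ u 1 * R a u 2 - Y₀ u 2 * R a u 1)) * h2
  · simp only [cross_c0, cross_c1, cross_c2, dotProduct, Fin.sum_univ_three,
      Pi.smul_apply, smul_eq_mul, Pi.add_apply, Pi.sub_apply, Pi.neg_apply,
      Matrix.mulVec_single, Matrix.replicateCol_apply, mul_one]
    field_simp
    linear_combination (f u * (Y₀ u 2 * R a u 0 - Y₀ u 0 * R a u 2)) * h2
  · simp only [cross_c0, cross_c1, cross_c2, dotProduct, Fin.sum_univ_three,
      Pi.smul_apply, smul_eq_mul, Pi.add_apply, Pi.sub_apply, Pi.neg_apply,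
      Matrix.mulVec_single, Matrix.replicateCol_apply, mul_one]
    field_simp
    linear_combination (f u * (Y₀ u 0 * R a u 1 - Y₀ u 1 * R a u 0)) * h2
end
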